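/- For every i∈I, every homogeneous y∈'𝔣 and every x∈'𝔣, one has (yθ_i, x) = α(|y|, i)(y, r_i(x))(θ_i, θ_i) and (θ_i y, x) = α(i, |y|)(θ_i, θ_i)(y, ᵢr(x)). -/

import Mathlib

open scoped TensorProduct

noncomputable section

/-- A Cartan datum on `I`. -/
structure CartanDatum (I : Type) where
  c : I → I → ℤ
  symm : ∀ i j, c i j = c j i
  pos : ∀ i, 0 < c i i
  even : ∀ i, Even (c i i)
  dvd : ∀ i j, i ≠ j → c i i ∣ 2 * c i j
  nonpos : ∀ i j, i ≠ j → 2 * c i j ≤ 0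

namespace CartanDatum

variable {I : Type} (cd : CartanDatum I)

/-- `d i = (i·i)/2`. -/
def d (i : I) : ℤ := cd.c i i / 2

/-- `a i j = 2(i·j)/(i·i)`. -/
def a (i j : I) : ℤ := 2 * cd.c i j / cd.c i i

/-- Extension of the pairing to `ℕ[I] × ℕ[I]`. -/
def dotN (ν μ : I →₀ ℕ) : ℤ :=
  ν.sum fun i m => μ.sum fun j n => (m : ℤ) * (n : ℤ) * cd.c i j

end CartanDatum

/-- A multiplicative bilinear form `ℕ[I] × ℕ[I] → 𝔽`. -/
structure MultForm (I 𝔽 : Type) [Field 𝔽] where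
  f : (I →₀ ℕ) → (I →₀ ℕ) → 𝔽
  add_left : ∀ ν ν' μ, f (ν + ν') μ = f ν μ * f ν' μ
  add_right : ∀ μ ν ν', f μ (ν + ν') = f μ ν * f μ ν'
  ne_zero : ∀ ν μ, f ν μ ≠ 0

/-- The trivial multiplicative bilinear form, constantly `1`. -/
def trivMF (I 𝔽 : Type) [Field 𝔽] : MultForm I 𝔽 :=
  ⟨fun _ _ => 1, fun _ _ _ => by ring, fun _ _ _ => by ring, fun _ _ => one_ne_zero⟩

variable {I : Type}

/-- The generator `i` of `ℕ[I]`. -/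
def δN (i : I) : I →₀ ℕ := Finsupp.single i 1

/-- The model for the free algebra `'𝔣` on the `θ i`. -/
abbrev FA (𝔽 I : Type) [Field 𝔽] := MonoidAlgebra 𝔽 (FreeMonoid I)

/-- The generator `θ i` of `'𝔣`. -/
def θ (𝔽 : Type) [Field 𝔽] {I : Type} (i : I) : FA 𝔽 I :=
  MonoidAlgebra.of 𝔽 (FreeMonoid I) (FreeMonoid.of i)

/-- The `ℕ[I]`-degree of a word. -/
def wt [DecidableEq I] (w : FreeMonoid I) : I →₀ ℕ :=
  Multiset.toFinsupp (↑(FreeMonoid.toList w))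

/-- Homogeneity of degree `ν` in `'𝔣`. -/
def IsHomog {𝔽 : Type} [Field 𝔽] [DecidableEq I] (ν : I →₀ ℕ) (x : FA 𝔽 I) : Prop :=
  ∀ w ∈ Finsupp.support (x.coeff : FreeMonoid I →₀ 𝔽), wt w = ν

/-- The model for `'𝔣 ⊗ '𝔣` (basis: pairs of words). -/
abbrev TA (𝔽 I : Type) [Field 𝔽] := MonoidAlgebra 𝔽 (FreeMonoid I × FreeMonoid I)

/-- The tensor `x ⊗ y` in the model of `'𝔣 ⊗ '𝔣`. -/
def tmul {𝔽 : Type} [Field 𝔽] (x y : FA 𝔽 I) : TA 𝔽 I :=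
  MonoidAlgebra.ofCoeff <| Finsupp.sum (x.coeff : FreeMonoid I →₀ 𝔽) fun w a =>
    Finsupp.sum (y.coeff : FreeMonoid I →₀ 𝔽) fun u b =>
      (Finsupp.single (w, u) (a * b) : (FreeMonoid I × FreeMonoid I) →₀ 𝔽)

/-- The twisted multiplication on `'𝔣 ⊗ '𝔣`:
`(x₁⊗x₂)(y₁⊗y₂) = v^{-|y₁|·|x₂|} β(|x₂|,|y₁|) x₁y₁ ⊗ x₂y₂`. -/
def tMul [DecidableEq I] {𝔽 : Type} [Field 𝔽] (cd : CartanDatum I) (v : 𝔽)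
    (β : MultForm I 𝔽) (z z' : TA 𝔽 I) : TA 𝔽 I :=
  MonoidAlgebra.ofCoeff <| Finsupp.sum (z.coeff : (FreeMonoid I × FreeMonoid I) →₀ 𝔽) fun p a =>
    Finsupp.sum (z'.coeff : (FreeMonoid I × FreeMonoid I) →₀ 𝔽) fun q b =>
      (Finsupp.single (p.1 * q.1, p.2 * q.2)
        (a * b * v ^ (-(cd.dotN (wt q.1) (wt p.2))) * β.f (wt p.2) (wt q.1))
        : (FreeMonoid I × FreeMonoid I) →₀ 𝔽)

/-- The bilinear form on `'𝔣 ⊗ '𝔣` induced by a form `B` on `'𝔣`: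
`(x₁⊗x₂, y₁⊗y₂) = α(|x₁|,|x₂|) (x₁,y₁) (x₂,y₂)` for homogeneous `x₁, x₂`. -/
def pairT [DecidableEq I] {𝔽 : Type} [Field 𝔽] (α : MultForm I 𝔽)
    (B : FA 𝔽 I →ₗ[𝔽] FA 𝔽 I →ₗ[𝔽] 𝔽) (z z' : TA 𝔽 I) : 𝔽 :=
  Finsupp.sum (z.coeff : (FreeMonoid I × FreeMonoid I) →₀ 𝔽) fun p a =>
    Finsupp.sum (z'.coeff : (FreeMonoid I × FreeMonoid I) →₀ 𝔽) fun q b =>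
      a * b * α.f (wt p.1) (wt p.2)
        * B (MonoidAlgebra.single p.1 1) (MonoidAlgebra.single q.1 1)
        * B (MonoidAlgebra.single p.2 1) (MonoidAlgebra.single q.2 1)

/-- The quantum integer `[n]_c`. -/
def qnum {𝔽 : Type} [Field 𝔽] (c : 𝔽) (n : ℕ) : 𝔽 :=
  (c ^ (n : ℤ) - c ^ (-(n : ℤ))) / (c - c⁻¹)

/-- The quantum factorial `[n]_c!`. -/
def qfact {𝔽 : Type} [Field 𝔽] (c : 𝔽) (n : ℕ) : 𝔽 :=
  ∏ k ∈ Finset.range n, qnum c (k + 1)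

/-- The divided power `θ_i^{(n)} = θ_i^n / [n]_{v_i}!`. -/
def θdiv [DecidableEq I] {𝔽 : Type} [Field 𝔽] (cd : CartanDatum I) (v : 𝔽)
    (i : I) (n : ℕ) : FA 𝔽 I :=
  (qfact (v ^ cd.d i) n)⁻¹ • (θ 𝔽 i) ^ n

/-- The twisted quantum Serre element
`D_{ij} = Σ_{k+k'=1-a_{ij}} (-1)^k β(i,j)^{-k} θ_i^{(k)} θ_j θ_i^{(k')}`. -/
def Dij [DecidableEq I] {𝔽 : Type} [Field 𝔽] (cd : CartanDatum I) (v : 𝔽)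
    (g : I → I → 𝔽) (i j : I) : FA 𝔽 I :=
  ∑ k ∈ Finset.range ((1 - cd.a i j).toNat + 1),
    ((-1 : 𝔽) ^ k * ((g i j)⁻¹) ^ k) •
      (θdiv cd v i k * θ 𝔽 j * θdiv cd v i ((1 - cd.a i j).toNat - k))

end

/-!
Pairing `y ⊗ θ_i` with `r(x)` only sees the components of `r(x)` whose second tensor factor is
the word `i`: compatibility of the form with `r` forces `(θ_i, 1) = (1, θ_j) = 0`, and together
with `(θ_i, θ_j) = 0` for `i ≠ j` this makes `θ_i` orthogonal to every other word. That slice of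
`r(x)` is `r_i(x)`, since both are linear in `x` and, by multiplicativity of `r`, satisfy the same
recursion when a letter is appended to a word on the right. Symmetrically, the slice of `r(x)`
with first factor `i` is `ᵢr(x)`, by induction on words built from the left.
-/

open MonoidAlgebra

namespace FreeMonoid

variable {α : Type*}

@[elab_as_elim]
theorem inductionOn_mul_of {motive : FreeMonoid α → Prop} (w : FreeMonoid α) (one : motive 1)
    (mul_of : ∀ w a, motive w → motive (w * of a)) : motive w :=
  List.reverseRecOn (motive := fun l => motive (ofList l)) w.toList one
    fun l a h => mul_of (ofList l) a h

theorem of_mul_ne_one (a : α) (w : FreeMonoid α) : of a * w ≠ 1 := by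
  simp [← toList.injective.eq_iff, toList_mul, toList_of, toList_one]

theorem mul_of_ne_one (w : FreeMonoid α) (a : α) : w * of a ≠ 1 := by
  simp [← toList.injective.eq_iff, toList_mul, toList_of, toList_one]

theorem of_mul_eq_of_iff {a b : α} {w : FreeMonoid α} : of a * w = of b ↔ a = b ∧ w = 1 := by
  simp [← toList.injective.eq_iff, toList_mul, toList_of, toList_one]

theorem mul_of_eq_of_iff {a b : α} {w : FreeMonoid α} : w * of a = of b ↔ w = 1 ∧ a = b := by
  simp [← toList.injective.eq_iff, toList_mul, toList_of, toList_one,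
    List.append_eq_singleton_iff]

end FreeMonoid

theorem MonoidAlgebra.single_eq_smul_single_one {R M : Type*} [Semiring R] (m : M) (r : R) :
    single m r = r • single m (1 : R) := by
  rw [smul_single', mul_one]

section Letters

variable {I 𝔽 : Type} [Field 𝔽]

theorem θ_eq_single (i : I) : θ 𝔽 i = single (FreeMonoid.of i) 1 := rfl

theorem single_mul_θ (w : FreeMonoid I) (j : I) :
    single w 1 * θ 𝔽 j = single (w * FreeMonoid.of j) 1 := by
  rw [θ_eq_single, single_mul_single, one_mul]

theorem θ_mul_single (j : I) (w : FreeMonoid I) :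
    θ 𝔽 j * single w 1 = single (FreeMonoid.of j * w) 1 := by
  rw [θ_eq_single, single_mul_single, one_mul]

theorem tmul_single_single (w u : FreeMonoid I) (a b : 𝔽) :
    tmul (single w a) (single u b) = single (w, u) (a * b) := by
  simp [tmul, coeff_single, ofCoeff_single, -Finsupp.single_mul]

theorem tmul_zero_left (y : FA 𝔽 I) : tmul 0 y = 0 := by
  simp [tmul]

theorem tmul_add_left (x x' y : FA 𝔽 I) : tmul (x + x') y = tmul x y + tmul x' y := by
  simp only [tmul, coeff_add]
  rw [Finsupp.sum_add_index' (by simp) (fun _ _ _ => by simp [add_mul, Finsupp.sum_add]),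
    ofCoeff_add]

theorem tmul_zero_right (x : FA 𝔽 I) : tmul x 0 = 0 := by
  simp [tmul]

theorem tmul_add_right (x y y' : FA 𝔽 I) : tmul x (y + y') = tmul x y + tmul x y' := by
  simp only [tmul, coeff_add]
  rw [← ofCoeff_add, ← Finsupp.sum_add]
  refine congrArg _ (Finsupp.sum_congr fun _ _ => ?_)
  rw [Finsupp.sum_add_index' (by simp) (fun _ _ _ => by simp [mul_add])]

theorem r_one_eq_single {r : FA 𝔽 I →ₗ[𝔽] TA 𝔽 I} (hr1 : r 1 = tmul 1 1) :
    r 1 = single (1, 1) 1 := by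
  rw [hr1, one_def, tmul_single_single, one_mul]

theorem r_θ_eq_single {r : FA 𝔽 I →ₗ[𝔽] TA 𝔽 I}
    (hrθ : ∀ i : I, r (θ 𝔽 i) = tmul (θ 𝔽 i) 1 + tmul 1 (θ 𝔽 i)) (i : I) :
    r (θ 𝔽 i) = single (FreeMonoid.of i, 1) 1 + single (1, FreeMonoid.of i) 1 := by
  rw [hrθ, θ_eq_single, one_def, tmul_single_single, tmul_single_single, one_mul]

end Letters

namespace MultForm

variable {I 𝔽 : Type} [Field 𝔽] (f : MultForm I 𝔽)

theorem f_zero_left (μ : I →₀ ℕ) : f.f 0 μ = 1 :=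
  (mul_eq_left₀ (f.ne_zero 0 μ)).mp (by rw [← f.add_left, add_zero])

theorem f_zero_right (ν : I →₀ ℕ) : f.f ν 0 = 1 :=
  (mul_eq_left₀ (f.ne_zero ν 0)).mp (by rw [← f.add_right, add_zero])

end MultForm

namespace CartanDatum

variable {I : Type} (cd : CartanDatum I)

theorem dotN_zero_left (μ : I →₀ ℕ) : cd.dotN 0 μ = 0 := by
  simp [dotN]

theorem dotN_zero_right (ν : I →₀ ℕ) : cd.dotN ν 0 = 0 := by
  simp [dotN]

theorem dotN_comm (ν μ : I →₀ ℕ) : cd.dotN ν μ = cd.dotN μ ν := by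
  rw [dotN, dotN, Finsupp.sum_comm]
  refine Finsupp.sum_congr fun i _ => Finsupp.sum_congr fun j _ => ?_
  rw [cd.symm]
  ring

end CartanDatum

section Words

variable {I : Type} [DecidableEq I] {𝔽 : Type} [Field 𝔽]

theorem wt_one : wt (1 : FreeMonoid I) = 0 := by
  simp [wt, FreeMonoid.toList_one]

theorem wt_of (i : I) : wt (FreeMonoid.of i) = δN i := by
  simp [wt, FreeMonoid.toList_of, δN]

theorem isHomog_single (w : FreeMonoid I) (a : 𝔽) : IsHomog (wt w) (single w a) := by
  intro u hu
  rw [Finset.mem_singleton.mp (Finsupp.support_single_subset hu)]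

theorem isHomog_θ (i : I) : IsHomog (δN i) (θ 𝔽 i) :=
  wt_of i ▸ isHomog_single _ _

theorem IsHomog.of_single_add {ν : I →₀ ℕ} {w : FreeMonoid I} {a : 𝔽} {x : FA 𝔽 I}
    (h : IsHomog ν (single w a + x)) (hw : w ∉ x.coeff.support) (ha : a ≠ 0) :
    wt w = ν ∧ IsHomog ν x := by
  rw [IsHomog, coeff_add, coeff_single, Finsupp.support_single_add hw ha] at h
  simp only [Finset.mem_cons, forall_eq_or_imp] at h
  exact h

end Words

section Bilinear

variable {I : Type} [DecidableEq I] {𝔽 : Type} [Field 𝔽] (cd : CartanDatum I) (v : 𝔽)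
  (β : MultForm I 𝔽)

theorem tMul_single_single (p q : FreeMonoid I × FreeMonoid I) (a b : 𝔽) :
    tMul cd v β (single p a) (single q b) = single (p.1 * q.1, p.2 * q.2)
      (a * b * v ^ (-(cd.dotN (wt q.1) (wt p.2))) * β.f (wt p.2) (wt q.1)) := by
  simp [tMul, coeff_single, ofCoeff_single, -Finsupp.single_mul]

theorem tMul_add_left (z z' z'' : TA 𝔽 I) :
    tMul cd v β (z + z') z'' = tMul cd v β z z'' + tMul cd v β z' z'' := by
  simp only [tMul, coeff_add]
  rw [Finsupp.sum_add_index' (by simp) (fun _ _ _ => by simp [add_mul, Finsupp.sum_add]),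
    ofCoeff_add]

theorem tMul_add_right (z z' z'' : TA 𝔽 I) :
    tMul cd v β z (z' + z'') = tMul cd v β z z' + tMul cd v β z z'' := by
  simp only [tMul, coeff_add]
  rw [← ofCoeff_add, ← Finsupp.sum_add]
  refine congrArg _ (Finsupp.sum_congr fun _ _ => ?_)
  rw [Finsupp.sum_add_index' (by simp) (fun _ _ _ => by simp [mul_add, add_mul])]

theorem tMul_zero_left (z : TA 𝔽 I) : tMul cd v β 0 z = 0 := by
  simp [tMul]

theorem tMul_zero_right (z : TA 𝔽 I) : tMul cd v β z 0 = 0 := by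
  simp [tMul]

variable (α : MultForm I 𝔽) (B : FA 𝔽 I →ₗ[𝔽] FA 𝔽 I →ₗ[𝔽] 𝔽)

theorem pairT_single_single (p q : FreeMonoid I × FreeMonoid I) (a b : 𝔽) :
    pairT α B (single p a) (single q b) = a * b * α.f (wt p.1) (wt p.2)
      * B (single p.1 1) (single q.1 1) * B (single p.2 1) (single q.2 1) := by
  simp [pairT, coeff_single]

theorem pairT_add_left (z z' z'' : TA 𝔽 I) :
    pairT α B (z + z') z'' = pairT α B z z'' + pairT α B z' z'' := by
  simp only [pairT, coeff_add]
  rw [Finsupp.sum_add_index' (by simp) (fun _ _ _ => by simp [add_mul, Finsupp.sum_add])]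

theorem pairT_add_right (z z' z'' : TA 𝔽 I) :
    pairT α B z (z' + z'') = pairT α B z z' + pairT α B z z'' := by
  simp only [pairT, coeff_add]
  rw [← Finsupp.sum_add]
  refine Finsupp.sum_congr fun _ _ => ?_
  rw [Finsupp.sum_add_index' (by simp) (fun _ _ _ => by ring)]

theorem pairT_zero_left (z : TA 𝔽 I) : pairT α B 0 z = 0 := by
  simp [pairT]

theorem pairT_zero_right (z : TA 𝔽 I) : pairT α B z 0 = 0 := by
  simp [pairT]

end Bilinear

section Slices

variable {I 𝔽 : Type} [Field 𝔽]

noncomputable def sliceRight (u : FreeMonoid I) : TA 𝔽 I →ₗ[𝔽] FA 𝔽 I :=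
  (coeffLinearEquiv 𝔽).symm.toLinearMap ∘ₗ
    Finsupp.lcomapDomain (·, u) (Prod.mk_left_injective u) ∘ₗ (coeffLinearEquiv 𝔽).toLinearMap

noncomputable def sliceLeft (u : FreeMonoid I) : TA 𝔽 I →ₗ[𝔽] FA 𝔽 I :=
  (coeffLinearEquiv 𝔽).symm.toLinearMap ∘ₗ
    Finsupp.lcomapDomain (u, ·) (Prod.mk_right_injective u) ∘ₗ (coeffLinearEquiv 𝔽).toLinearMap

@[simp]
theorem coeff_sliceRight (u w : FreeMonoid I) (z : TA 𝔽 I) :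
    (sliceRight u z).coeff w = z.coeff (w, u) := rfl

@[simp]
theorem coeff_sliceLeft (u w : FreeMonoid I) (z : TA 𝔽 I) :
    (sliceLeft u z).coeff w = z.coeff (u, w) := rfl

theorem sliceRight_single_self (w u : FreeMonoid I) (a : 𝔽) :
    sliceRight u (single (w, u) a) = single w a := by
  ext w'
  classical
  simp [coeff_single, Finsupp.single_apply]

theorem sliceRight_single_of_ne {p : FreeMonoid I × FreeMonoid I} {u : FreeMonoid I}
    (h : p.2 ≠ u) (a : 𝔽) : sliceRight u (single p a) = 0 := by
  ext w'
  classical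
  simp [coeff_single, Finsupp.single_apply]
  rintro rfl
  exact (h rfl).elim

theorem sliceLeft_single_self (u w : FreeMonoid I) (a : 𝔽) :
    sliceLeft u (single (u, w) a) = single w a := by
  ext w'
  classical
  simp [coeff_single, Finsupp.single_apply]

theorem sliceLeft_single_of_ne {p : FreeMonoid I × FreeMonoid I} {u : FreeMonoid I}
    (h : p.1 ≠ u) (a : 𝔽) : sliceLeft u (single p a) = 0 := by
  ext w'
  classical
  simp [coeff_single, Finsupp.single_apply]
  rintro rfl
  exact (h rfl).elim

variable [DecidableEq I] (cd : CartanDatum I) (v : 𝔽) (β : MultForm I 𝔽)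

theorem sliceRight_tMul_single_of_one (u : FreeMonoid I) (j : I) (z : TA 𝔽 I) :
    sliceRight u (tMul cd v β z (single (FreeMonoid.of j, 1) 1))
      = (v ^ (-(cd.dotN (δN j) (wt u))) * β.f (wt u) (δN j)) • (sliceRight u z * θ 𝔽 j) := by
  induction z using MonoidAlgebra.induction_linear with
  | zero => simp [tMul_zero_left]
  | add z z' h h' => rw [tMul_add_left, map_add, h, h', map_add, add_mul, smul_add]
  | single q b =>
    rw [tMul_single_single]
    by_cases hq : q.2 = u
    · obtain ⟨w, u⟩ := q
      subst hq
      simp only [mul_one, sliceRight_single_self, θ_eq_single, single_mul_single, smul_single',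
        wt_of]
      ring_nf
    · rw [sliceRight_single_of_ne hq, sliceRight_single_of_ne (by simpa using hq), zero_mul,
        smul_zero]

theorem sliceRight_mul_of_tMul_single_one_of (u : FreeMonoid I) (j : I) (z : TA 𝔽 I) :
    sliceRight (u * FreeMonoid.of j) (tMul cd v β z (single (1, FreeMonoid.of j) 1))
      = sliceRight u z := by
  induction z using MonoidAlgebra.induction_linear with
  | zero => simp [tMul_zero_left]
  | add z z' h h' => rw [tMul_add_left, map_add, h, h', map_add]
  | single q b =>
    rw [tMul_single_single]
    by_cases hq : q.2 = u
    · obtain ⟨w, u⟩ := q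
      subst hq
      simp [sliceRight_single_self, wt_one, cd.dotN_zero_left, β.f_zero_right]
    · rw [sliceRight_single_of_ne hq, sliceRight_single_of_ne (by simpa using hq)]

theorem sliceRight_tMul_single_one_of_eq_zero {u : FreeMonoid I} {j : I}
    (hu : ∀ u', u ≠ u' * FreeMonoid.of j) (z : TA 𝔽 I) :
    sliceRight u (tMul cd v β z (single (1, FreeMonoid.of j) 1)) = 0 := by
  induction z using MonoidAlgebra.induction_linear with
  | zero => simp [tMul_zero_left]
  | add z z' h h' => rw [tMul_add_left, map_add, h, h', add_zero]
  | single q b => rw [tMul_single_single, sliceRight_single_of_ne (hu q.2).symm]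

theorem sliceLeft_tMul_single_one_of (u : FreeMonoid I) (j : I) (z : TA 𝔽 I) :
    sliceLeft u (tMul cd v β (single (1, FreeMonoid.of j) 1) z)
      = (v ^ (-(cd.dotN (wt u) (δN j))) * β.f (δN j) (wt u)) • (θ 𝔽 j * sliceLeft u z) := by
  induction z using MonoidAlgebra.induction_linear with
  | zero => simp [tMul_zero_right]
  | add z z' h h' => rw [tMul_add_right, map_add, h, h', map_add, mul_add, smul_add]
  | single q b =>
    rw [tMul_single_single]
    by_cases hq : q.1 = u
    · obtain ⟨u, w⟩ := q
      subst hq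
      simp only [one_mul, sliceLeft_single_self, θ_eq_single, single_mul_single, smul_single',
        wt_of]
      ring_nf
    · rw [sliceLeft_single_of_ne (by simpa using hq), sliceLeft_single_of_ne hq, mul_zero,
        smul_zero]

theorem sliceLeft_of_mul_tMul_single_of_one (j : I) (u : FreeMonoid I) (z : TA 𝔽 I) :
    sliceLeft (FreeMonoid.of j * u) (tMul cd v β (single (FreeMonoid.of j, 1) 1) z)
      = sliceLeft u z := by
  induction z using MonoidAlgebra.induction_linear with
  | zero => simp [tMul_zero_right]
  | add z z' h h' => rw [tMul_add_right, map_add, h, h', map_add]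
  | single q b =>
    rw [tMul_single_single]
    by_cases hq : q.1 = u
    · obtain ⟨u, w⟩ := q
      subst hq
      simp [sliceLeft_single_self, wt_one, cd.dotN_zero_right, β.f_zero_left]
    · rw [sliceLeft_single_of_ne hq, sliceLeft_single_of_ne (by simpa using hq)]

theorem sliceLeft_tMul_single_of_one_eq_zero {u : FreeMonoid I} {j : I}
    (hu : ∀ u', u ≠ FreeMonoid.of j * u') (z : TA 𝔽 I) :
    sliceLeft u (tMul cd v β (single (FreeMonoid.of j, 1) 1) z) = 0 := by
  induction z using MonoidAlgebra.induction_linear with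
  | zero => simp [tMul_zero_right]
  | add z z' h h' => rw [tMul_add_right, map_add, h, h', add_zero]
  | single q b => rw [tMul_single_single, sliceLeft_single_of_ne (hu q.1).symm]

end Slices

section Coproduct

variable {I 𝔽 : Type} [Field 𝔽] [DecidableEq I] (cd : CartanDatum I) (v : 𝔽)
  (β : MultForm I 𝔽) {r : FA 𝔽 I →ₗ[𝔽] TA 𝔽 I}

theorem sliceRight_one_r_single (hr1 : r 1 = tmul 1 1)
    (hrθ : ∀ i : I, r (θ 𝔽 i) = tmul (θ 𝔽 i) 1 + tmul 1 (θ 𝔽 i))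
    (hrm : ∀ x y : FA 𝔽 I, r (x * y) = tMul cd v β (r x) (r y)) (w : FreeMonoid I) :
    sliceRight 1 (r (single w 1)) = single w (1 : 𝔽) := by
  induction w using FreeMonoid.inductionOn_mul_of with
  | one => rw [← one_def, r_one_eq_single hr1, sliceRight_single_self, one_def]
  | mul_of w j ih =>
    rw [← single_mul_θ, hrm, r_θ_eq_single hrθ, tMul_add_right, map_add,
      sliceRight_tMul_single_of_one, ih,
      sliceRight_tMul_single_one_of_eq_zero _ _ _ fun u => (FreeMonoid.mul_of_ne_one u j).symm]
    simp [wt_one, cd.dotN_zero_right, β.f_zero_left]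

theorem sliceLeft_one_r_single (hr1 : r 1 = tmul 1 1)
    (hrθ : ∀ i : I, r (θ 𝔽 i) = tmul (θ 𝔽 i) 1 + tmul 1 (θ 𝔽 i))
    (hrm : ∀ x y : FA 𝔽 I, r (x * y) = tMul cd v β (r x) (r y)) (w : FreeMonoid I) :
    sliceLeft 1 (r (single w 1)) = single w (1 : 𝔽) := by
  induction w using FreeMonoid.inductionOn' with
  | one => rw [← one_def, r_one_eq_single hr1, sliceLeft_single_self, one_def]
  | of_mul j w ih =>
    rw [← θ_mul_single, hrm, r_θ_eq_single hrθ, tMul_add_left, map_add,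
      sliceLeft_tMul_single_of_one_eq_zero _ _ _ fun u => (FreeMonoid.of_mul_ne_one j u).symm,
      sliceLeft_tMul_single_one_of, ih]
    simp [wt_one, cd.dotN_zero_left, β.f_zero_right]

theorem sliceRight_of_r (hr1 : r 1 = tmul 1 1)
    (hrθ : ∀ i : I, r (θ 𝔽 i) = tmul (θ 𝔽 i) 1 + tmul 1 (θ 𝔽 i))
    (hrm : ∀ x y : FA 𝔽 I, r (x * y) = tMul cd v β (r x) (r y))
    (i : I) (ri : FA 𝔽 I →ₗ[𝔽] FA 𝔽 I) (hri1 : ri 1 = 0)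
    (hriθ : ∀ j : I, ri (θ 𝔽 j) = if i = j then 1 else 0)
    (hrim : ∀ (ν μ : I →₀ ℕ) (x y : FA 𝔽 I), IsHomog ν x → IsHomog μ y →
      ri (x * y) = (v ^ (-(cd.dotN (δN i) μ)) * β.f (δN i) μ) • (ri x * y) + x * ri y)
    (x : FA 𝔽 I) : sliceRight (FreeMonoid.of i) (r x) = ri x := by
  suffices sliceRight (FreeMonoid.of i) ∘ₗ r = ri from LinearMap.congr_fun this x
  refine MonoidAlgebra.lhom_ext' fun w => LinearMap.ext_ring ?_
  simp only [LinearMap.comp_apply, lsingle_apply]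
  -- Appending letters on the right makes the twist of `tMul` depend only on the slice index.
  induction w using FreeMonoid.inductionOn_mul_of with
  | one =>
    rw [← one_def, r_one_eq_single hr1, hri1, sliceRight_single_of_ne (FreeMonoid.one_ne_of i)]
  | mul_of w j ih =>
    have hslice : sliceRight (FreeMonoid.of i)
        (tMul cd v β (r (single w 1)) (single (1, FreeMonoid.of j) 1))
          = if i = j then single w 1 else 0 := by
      split_ifs with hij
      · subst hij
        simpa [sliceRight_one_r_single cd v β hr1 hrθ hrm w] using
          sliceRight_mul_of_tMul_single_one_of cd v β 1 i (r (single w 1))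
      · exact sliceRight_tMul_single_one_of_eq_zero cd v β
          (fun u h => hij (FreeMonoid.mul_of_eq_of_iff.mp h.symm).2.symm) _
    rw [← single_mul_θ, hrm, r_θ_eq_single hrθ, tMul_add_right, map_add,
      sliceRight_tMul_single_of_one, ih, hslice,
      hrim _ _ _ _ (isHomog_single w 1) (isHomog_θ j), hriθ, wt_of, cd.dotN_comm]
    simp

theorem sliceLeft_of_r (hr1 : r 1 = tmul 1 1)
    (hrθ : ∀ i : I, r (θ 𝔽 i) = tmul (θ 𝔽 i) 1 + tmul 1 (θ 𝔽 i))
    (hrm : ∀ x y : FA 𝔽 I, r (x * y) = tMul cd v β (r x) (r y))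
    (i : I) (ir : FA 𝔽 I →ₗ[𝔽] FA 𝔽 I) (hir1 : ir 1 = 0)
    (hirθ : ∀ j : I, ir (θ 𝔽 j) = if i = j then 1 else 0)
    (hirm : ∀ (ν μ : I →₀ ℕ) (x y : FA 𝔽 I), IsHomog ν x → IsHomog μ y →
      ir (x * y) = ir x * y + (v ^ (-(cd.dotN (δN i) ν)) * β.f ν (δN i)) • (x * ir y))
    (x : FA 𝔽 I) : sliceLeft (FreeMonoid.of i) (r x) = ir x := by
  suffices sliceLeft (FreeMonoid.of i) ∘ₗ r = ir from LinearMap.congr_fun this x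
  refine MonoidAlgebra.lhom_ext' fun w => LinearMap.ext_ring ?_
  simp only [LinearMap.comp_apply, lsingle_apply]
  induction w using FreeMonoid.inductionOn' with
  | one =>
    rw [← one_def, r_one_eq_single hr1, hir1, sliceLeft_single_of_ne (FreeMonoid.one_ne_of i)]
  | of_mul j w ih =>
    have hslice : sliceLeft (FreeMonoid.of i)
        (tMul cd v β (single (FreeMonoid.of j, 1) 1) (r (single w 1)))
          = if i = j then single w 1 else 0 := by
      split_ifs with hij
      · subst hij
        simpa [sliceLeft_one_r_single cd v β hr1 hrθ hrm w] using
          sliceLeft_of_mul_tMul_single_of_one cd v β i 1 (r (single w 1))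
      · exact sliceLeft_tMul_single_of_one_eq_zero cd v β
          (fun u h => hij (FreeMonoid.of_mul_eq_of_iff.mp h.symm).1.symm) _
    rw [← θ_mul_single, hrm, r_θ_eq_single hrθ, tMul_add_left, map_add, hslice,
      sliceLeft_tMul_single_one_of, ih, hirm _ _ _ _ (isHomog_θ j) (isHomog_single w 1), hirθ,
      wt_of]
    simp

end Coproduct

section Pairing

variable {I 𝔽 : Type} [Field 𝔽] [DecidableEq I] {r : FA 𝔽 I →ₗ[𝔽] TA 𝔽 I} {α : MultForm I 𝔽}
  {B : FA 𝔽 I →ₗ[𝔽] FA 𝔽 I →ₗ[𝔽] 𝔽}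

theorem pairing_one_θ_eq_zero (hrθ : ∀ i : I, r (θ 𝔽 i) = tmul (θ 𝔽 i) 1 + tmul 1 (θ 𝔽 i))
    (hB1 : B 1 1 = 1) (hBl : ∀ x' x'' y, B (x' * x'') y = pairT α B (tmul x' x'') (r y))
    (j : I) : B 1 (θ 𝔽 j) = 0 := by
  have h := hBl 1 1 (θ 𝔽 j)
  rw [one_mul, r_θ_eq_single hrθ, one_def, tmul_single_single, pairT_add_right,
    pairT_single_single, pairT_single_single, ← one_def, ← θ_eq_single, hB1] at h
  simp only [wt_one, α.f_zero_left] at h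
  linear_combination -h

theorem pairing_θ_one_eq_zero (hrθ : ∀ i : I, r (θ 𝔽 i) = tmul (θ 𝔽 i) 1 + tmul 1 (θ 𝔽 i))
    (hB1 : B 1 1 = 1) (hBr : ∀ x y' y'', B x (y' * y'') = pairT α B (r x) (tmul y' y''))
    (i : I) : B (θ 𝔽 i) 1 = 0 := by
  have h := hBr (θ 𝔽 i) 1 1
  rw [one_mul, r_θ_eq_single hrθ, one_def, tmul_single_single, pairT_add_left,
    pairT_single_single, pairT_single_single, ← one_def, ← θ_eq_single, hB1] at h
  simp only [wt_one, wt_of, α.f_zero_left, α.f_zero_right] at h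
  linear_combination -h

theorem pairing_one_single_eq_zero (hr1 : r 1 = tmul 1 1)
    (hrθ : ∀ i : I, r (θ 𝔽 i) = tmul (θ 𝔽 i) 1 + tmul 1 (θ 𝔽 i)) (hB1 : B 1 1 = 1)
    (hBr : ∀ x y' y'', B x (y' * y'') = pairT α B (r x) (tmul y' y''))
    (hBl : ∀ x' x'' y, B (x' * x'') y = pairT α B (tmul x' x'') (r y))
    {w : FreeMonoid I} (hw : w ≠ 1) : B 1 (single w 1) = 0 := by
  cases w using FreeMonoid.casesOn with
  | one => exact absurd rfl hw
  | of_mul j w =>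
    rw [← θ_mul_single, hBr, r_one_eq_single hr1, θ_eq_single, tmul_single_single,
      pairT_single_single]
    simp only [← one_def, ← θ_eq_single, pairing_one_θ_eq_zero hrθ hB1 hBl]
    simp

theorem pairing_θ_single_eq_zero (hr1 : r 1 = tmul 1 1)
    (hrθ : ∀ i : I, r (θ 𝔽 i) = tmul (θ 𝔽 i) 1 + tmul 1 (θ 𝔽 i)) (hB1 : B 1 1 = 1)
    (hBθ : ∀ i j : I, i ≠ j → B (θ 𝔽 i) (θ 𝔽 j) = 0)
    (hBr : ∀ x y' y'', B x (y' * y'') = pairT α B (r x) (tmul y' y''))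
    (hBl : ∀ x' x'' y, B (x' * x'') y = pairT α B (tmul x' x'') (r y))
    {i : I} {u : FreeMonoid I} (hu : u ≠ FreeMonoid.of i) : B (θ 𝔽 i) (single u 1) = 0 := by
  cases u using FreeMonoid.casesOn with
  | one => rw [← one_def, pairing_θ_one_eq_zero hrθ hB1 hBr]
  | of_mul j w =>
    rw [← θ_mul_single, hBr, r_θ_eq_single hrθ, θ_eq_single j, tmul_single_single,
      pairT_add_left, pairT_single_single, pairT_single_single]
    simp only [← one_def, ← θ_eq_single, pairing_one_θ_eq_zero hrθ hB1 hBl, wt_one, wt_of,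
      α.f_zero_left, α.f_zero_right]
    by_cases hw : w = 1
    · subst hw
      have hij : i ≠ j := fun h => hu (by rw [h, mul_one])
      simp [hBθ i j hij]
    · simp [pairing_one_single_eq_zero hr1 hrθ hB1 hBr hBl hw]

end Pairing

section Adjoint

variable {I 𝔽 : Type} [Field 𝔽] [DecidableEq I] {α : MultForm I 𝔽}
  {B : FA 𝔽 I →ₗ[𝔽] FA 𝔽 I →ₗ[𝔽] 𝔽} {u : FreeMonoid I}

theorem pairT_single_of_orthogonal_right (hu : ∀ u', u' ≠ u → B (single u 1) (single u' 1) = 0)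
    (w : FreeMonoid I) (a : 𝔽) (z : TA 𝔽 I) :
    pairT α B (single (w, u) a) z
      = a * α.f (wt w) (wt u) * B (single w 1) (sliceRight u z) * B (single u 1) (single u 1) := by
  induction z using MonoidAlgebra.induction_linear with
  | zero => simp [pairT_zero_right]
  | add z z' h h' => rw [pairT_add_right, h, h', map_add, map_add]; ring
  | single q b =>
    rw [pairT_single_single]
    by_cases hq : q.2 = u
    · obtain ⟨w', u⟩ := q
      subst hq
      rw [sliceRight_single_self, single_eq_smul_single_one w' b, map_smul, smul_eq_mul]
      ring
    · rw [hu _ hq, sliceRight_single_of_ne hq, map_zero]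
      ring

theorem pairT_single_of_orthogonal_left (hu : ∀ u', u' ≠ u → B (single u 1) (single u' 1) = 0)
    (w : FreeMonoid I) (a : 𝔽) (z : TA 𝔽 I) :
    pairT α B (single (u, w) a) z
      = a * α.f (wt u) (wt w) * B (single u 1) (single u 1) * B (single w 1) (sliceLeft u z) := by
  induction z using MonoidAlgebra.induction_linear with
  | zero => simp [pairT_zero_right]
  | add z z' h h' => rw [pairT_add_right, h, h', map_add, map_add]; ring
  | single q b =>
    rw [pairT_single_single]
    by_cases hq : q.1 = u
    · obtain ⟨u, w'⟩ := q
      subst hq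
      rw [sliceLeft_single_self, single_eq_smul_single_one w' b, map_smul, smul_eq_mul]
      ring
    · rw [hu _ hq, sliceLeft_single_of_ne hq, map_zero]
      ring

theorem pairT_tmul_of_orthogonal_right (hu : ∀ u', u' ≠ u → B (single u 1) (single u' 1) = 0)
    {ν : I →₀ ℕ} {y : FA 𝔽 I} (hy : IsHomog ν y) (z : TA 𝔽 I) :
    pairT α B (tmul y (single u 1)) z
      = α.f ν (wt u) * B y (sliceRight u z) * B (single u 1) (single u 1) := by
  induction y using MonoidAlgebra.induction with
  | zero => simp [tmul_zero_left, pairT_zero_left]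
  | single_add w a y hw ha ih =>
    obtain ⟨rfl, hy⟩ := hy.of_single_add hw ha
    rw [tmul_add_left, pairT_add_left, ih hy, tmul_single_single, mul_one,
      pairT_single_of_orthogonal_right hu, map_add, LinearMap.add_apply,
      single_eq_smul_single_one w a, map_smul, LinearMap.smul_apply, smul_eq_mul]
    ring

theorem pairT_tmul_of_orthogonal_left (hu : ∀ u', u' ≠ u → B (single u 1) (single u' 1) = 0)
    {ν : I →₀ ℕ} {y : FA 𝔽 I} (hy : IsHomog ν y) (z : TA 𝔽 I) :
    pairT α B (tmul (single u 1) y) z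
      = α.f (wt u) ν * B (single u 1) (single u 1) * B y (sliceLeft u z) := by
  induction y using MonoidAlgebra.induction with
  | zero => simp [tmul_zero_right, pairT_zero_left]
  | single_add w a y hw ha ih =>
    obtain ⟨rfl, hy⟩ := hy.of_single_add hw ha
    rw [tmul_add_right, pairT_add_left, ih hy, tmul_single_single, one_mul,
      pairT_single_of_orthogonal_left hu, map_add, LinearMap.add_apply,
      single_eq_smul_single_one w a, map_smul, LinearMap.smul_apply, smul_eq_mul]
    ring

end Adjoint

theorem pairing_theta_adjoint_general
    {I : Type} [DecidableEq I] (cd : CartanDatum I)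
    {𝔽 : Type} [Field 𝔽] (v : 𝔽)
    (α β : MultForm I 𝔽)
    (r : FA 𝔽 I →ₗ[𝔽] TA 𝔽 I)
    (hr1 : r 1 = tmul 1 1)
    (hrθ : ∀ i : I, r (θ 𝔽 i) = tmul (θ 𝔽 i) 1 + tmul 1 (θ 𝔽 i))
    (hrm : ∀ x y : FA 𝔽 I, r (x * y) = tMul cd v β (r x) (r y))
    (B : FA 𝔽 I →ₗ[𝔽] FA 𝔽 I →ₗ[𝔽] 𝔽)
    (hB1 : B 1 1 = 1)
    (hBθ : ∀ i j : I, B (θ 𝔽 i) (θ 𝔽 j) = if i = j then (1 - v ^ (-(cd.c i i)))⁻¹ else 0)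
    (hBr : ∀ x y' y'', B x (y' * y'') = pairT α B (r x) (tmul y' y''))
    (hBl : ∀ x' x'' y, B (x' * x'') y = pairT α B (tmul x' x'') (r y))
    (ri : I → (FA 𝔽 I →ₗ[𝔽] FA 𝔽 I))
    (hri1 : ∀ i, ri i 1 = 0)
    (hriθ : ∀ i j : I, ri i (θ 𝔽 j) = if i = j then 1 else 0)
    (hrim : ∀ (i : I) (ν μ : I →₀ ℕ) (x y : FA 𝔽 I), IsHomog ν x → IsHomog μ y →
      ri i (x * y) = (v ^ (-(cd.dotN (δN i) μ)) * β.f (δN i) μ) • (ri i x * y) + x * ri i y)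
    (ir : I → (FA 𝔽 I →ₗ[𝔽] FA 𝔽 I))
    (hir1 : ∀ i, ir i 1 = 0)
    (hirθ : ∀ i j : I, ir i (θ 𝔽 j) = if i = j then 1 else 0)
    (hirm : ∀ (i : I) (ν μ : I →₀ ℕ) (x y : FA 𝔽 I), IsHomog ν x → IsHomog μ y →
      ir i (x * y) = ir i x * y + (v ^ (-(cd.dotN (δN i) ν)) * β.f ν (δN i)) • (x * ir i y))
    :
    ∀ (i : I) (ν : I →₀ ℕ) (y : FA 𝔽 I), IsHomog ν y → ∀ x : FA 𝔽 I,
      B (y * θ 𝔽 i) x = α.f ν (δN i) * B y (ri i x) * B (θ 𝔽 i) (θ 𝔽 i) ∧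
      B (θ 𝔽 i * y) x = α.f (δN i) ν * B (θ 𝔽 i) (θ 𝔽 i) * B y (ir i x) := by
  intro i ν y hy x
  have hθ : ∀ u, u ≠ FreeMonoid.of i → B (single (FreeMonoid.of i) 1) (single u 1) = 0 :=
    fun _ hu => pairing_θ_single_eq_zero hr1 hrθ hB1
      (fun i j hij => by rw [hBθ, if_neg hij]) hBr hBl hu
  constructor
  · rw [hBl, θ_eq_single, pairT_tmul_of_orthogonal_right hθ hy, wt_of,
      sliceRight_of_r cd v β hr1 hrθ hrm i (ri i) (hri1 i) (hriθ i) (hrim i)]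
  · rw [hBl, θ_eq_single, pairT_tmul_of_orthogonal_left hθ hy, wt_of,
      sliceLeft_of_r cd v β hr1 hrθ hrm i (ir i) (hir1 i) (hirθ i) (hirm i)]

theorem pairing_theta_adjoint
    {I : Type} [Fintype I] [DecidableEq I] (cd : CartanDatum I)
    {𝔽 : Type} [Field 𝔽] [CharZero 𝔽] (v : 𝔽) (hv : Transcendental ℚ v)
    (α β : MultForm I 𝔽)
    (hαβ : ∀ i j : I, β.f (δN i) (δN j) * α.f (δN j) (δN i)
      = β.f (δN j) (δN i) * α.f (δN i) (δN j))
    (hββ : ∀ i j : I, β.f (δN i) (δN j) * β.f (δN j) (δN i) = 1)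
    (hβii : ∀ i : I, β.f (δN i) (δN i) = 1)
    (r : FA 𝔽 I →ₗ[𝔽] TA 𝔽 I)
    (hr1 : r 1 = tmul 1 1)
    (hrθ : ∀ i : I, r (θ 𝔽 i) = tmul (θ 𝔽 i) 1 + tmul 1 (θ 𝔽 i))
    (hrm : ∀ x y : FA 𝔽 I, r (x * y) = tMul cd v β (r x) (r y))
    (B : FA 𝔽 I →ₗ[𝔽] FA 𝔽 I →ₗ[𝔽] 𝔽)
    (hBsymm : ∀ x y, B x y = B y x)
    (hB1 : B 1 1 = 1)
    (hBθ : ∀ i j : I, B (θ 𝔽 i) (θ 𝔽 j) = if i = j then (1 - v ^ (-(cd.c i i)))⁻¹ else 0)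
    (hBr : ∀ x y' y'', B x (y' * y'') = pairT α B (r x) (tmul y' y''))
    (hBl : ∀ x' x'' y, B (x' * x'') y = pairT α B (tmul x' x'') (r y))
    (ri : I → (FA 𝔽 I →ₗ[𝔽] FA 𝔽 I))
    (hri1 : ∀ i, ri i 1 = 0)
    (hriθ : ∀ i j : I, ri i (θ 𝔽 j) = if i = j then 1 else 0)
    (hrim : ∀ (i : I) (ν μ : I →₀ ℕ) (x y : FA 𝔽 I), IsHomog ν x → IsHomog μ y →
      ri i (x * y) = (v ^ (-(cd.dotN (δN i) μ)) * β.f (δN i) μ) • (ri i x * y) + x * ri i y)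
    (ir : I → (FA 𝔽 I →ₗ[𝔽] FA 𝔽 I))
    (hir1 : ∀ i, ir i 1 = 0)
    (hirθ : ∀ i j : I, ir i (θ 𝔽 j) = if i = j then 1 else 0)
    (hirm : ∀ (i : I) (ν μ : I →₀ ℕ) (x y : FA 𝔽 I), IsHomog ν x → IsHomog μ y →
      ir i (x * y) = ir i x * y + (v ^ (-(cd.dotN (δN i) ν)) * β.f ν (δN i)) • (x * ir i y))
    :
    ∀ (i : I) (ν : I →₀ ℕ) (y : FA 𝔽 I), IsHomog ν y → ∀ x : FA 𝔽 I,
      B (y * θ 𝔽 i) x = α.f ν (δN i) * B y (ri i x) * B (θ 𝔽 i) (θ 𝔽 i) ∧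
      B (θ 𝔽 i * y) x = α.f (δN i) ν * B (θ 𝔽 i) (θ 𝔽 i) * B y (ir i x) :=
  pairing_theta_adjoint_general cd v α β r hr1 hrθ hrm B hB1 hBθ hBr hBl ri hri1 hriθ hrim ir hir1
    hirθ hirm
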